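/- Let η be a configuration on ℤ², let b ∈ ℤ, and let K be a cluster of G_η. Suppose there exist infinitely many pairwise distinct clusters D of the half-plane restriction HP_b(G_η) such that D is infinite, the vertex set of D is contained in the vertex set of K, and the set {x ∈ ℤ : (x,b) ∈ D} is finite. Then K, regarded as a connected graph on its own vertex set, has infinitely many ends. -/

import Mathlib

open MeasureTheory

/-- Vertices of the square lattice `ℤ²`. -/
abbrev Vertex : Type := ℤ × ℤ

/-- Edges of `ℤ²`, encoded as a base vertex together with a direction:
`false` is the horizontal edge from `v` to `v + (1,0)`, `true` the vertical
edge from `v` to `v + (0,1)`. -/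
abbrev Edge : Type := Vertex × Bool

/-- Percolation configurations `η : E(ℤ²) → {0,1}`. -/
abbrev Config : Type := Edge → Bool

/-- The displacement vector of an edge with direction `d`. -/
def edgeDir (d : Bool) : Vertex := if d then (0, 1) else (1, 0)

/-- `joins e u v` says that the edge `e` has endpoints `u` and `v`. -/
def joins (e : Edge) (u v : Vertex) : Prop :=
  (e.1 = u ∧ u + edgeDir e.2 = v) ∨ (e.1 = v ∧ v + edgeDir e.2 = u)

/-- The open subgraph `G_η` of `ℤ²`: two vertices are adjacent iff some open
edge joins them. -/
def openGraph (η : Config) : SimpleGraph Vertex where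
  Adj u v := u ≠ v ∧ ∃ e : Edge, η e = true ∧ joins e u v
  symm := by
    constructor
    rintro u v ⟨hne, e, he, hj⟩
    exact ⟨hne.symm, e, he, hj.symm⟩
  loopless := by
    constructor
    rintro u ⟨hne, -⟩
    exact hne rfl

/-- The half-plane restriction `HP_b(G_η)`: keep only open edges with both
endpoints having second coordinate `≥ b`. -/
def hpGraph (b : ℤ) (η : Config) : SimpleGraph Vertex where
  Adj u v := b ≤ u.2 ∧ b ≤ v.2 ∧ (openGraph η).Adj u v
  symm := by
    constructor
    rintro u v ⟨hu, hv, h⟩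
    exact ⟨hv, hu, h.symm⟩
  loopless := by
    constructor
    rintro u ⟨-, -, h⟩
    exact h.ne rfl

/-- `C` is a cluster (connected component) of `G_η`. -/
def IsCluster (η : Config) (C : Set Vertex) : Prop :=
  ∃ v : Vertex, C = {u | (openGraph η).Reachable v u}

/-- `C` is a cluster of the half-plane restriction `HP_b(G_η)`: the component
of some vertex lying in the half-plane `{y ≥ b}`. -/
def IsClusterHP (b : ℤ) (η : Config) (C : Set Vertex) : Prop :=
  ∃ v : Vertex, b ≤ v.2 ∧ C = {u | (hpGraph b η).Reachable v u}

/-- The dual configuration `η*`: a dual edge is open iff the primal edge it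
crosses is closed.  The dual edge with base `(a,c)` and direction `false`
(going to `(a+1,c)`) crosses the primal vertical edge `{(a+1,c),(a+1,c+1)}`;
the dual edge with base `(a,c)` and direction `true` (going to `(a,c+1)`)
crosses the primal horizontal edge `{(a,c+1),(a+1,c+1)}`. -/
def dualConfig (η : Config) : Config := fun e =>
  if e.2 then !η ((e.1.1, e.1.2 + 1), false) else !η ((e.1.1 + 1, e.1.2), true)

/-- Translation of configurations: `(T_t η)(e) = η (e - t)`. -/
def shift (t : Vertex) (η : Config) : Config := fun e => η (e.1 - t, e.2)

/-! By König's lemma (compactness of the inverse system of complementary components), each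
infinite half-plane cluster `D ⊆ K` determines an end of `K` all of whose complementary
components meet `D` in an infinite set. Distinct clusters `D` give distinct ends: a vertex of `D`
with an open edge leaving `D` must lie on the line `y = b`, so after deleting the finitely many
such vertices, any component of `K` that meets `D` lies inside `D`; and distinct half-plane
clusters are disjoint. -/

namespace SimpleGraph

variable {V : Type*} {G : SimpleGraph V}

lemma ComponentCompl.mem_iff_of_boundary_subset {S D : Set V}
    (hS : {x ∈ D | ∃ y, G.Adj x y ∧ y ∉ D} ⊆ S) (C : G.ComponentCompl S) {v w : V}
    (hv : v ∈ C) (hw : w ∈ C) : v ∈ D ↔ w ∈ D := by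
  let memD : G.ComponentCompl S → Prop := ComponentCompl.lift (fun v _ => v ∈ D)
    fun v w hv hw hvw => propext
      ⟨fun hvD => by_contra fun hwD => hv (hS ⟨hvD, w, hvw, hwD⟩),
       fun hwD => by_contra fun hvD => hw (hS ⟨hwD, v, hvw.symm, hvD⟩)⟩
  obtain ⟨hvS, rfl⟩ := hv
  obtain ⟨hwS, hw⟩ := hw
  exact Iff.of_eq (congrArg memD hw).symm

lemma exists_componentCompl_infinite_inter [G.LocallyFinite] [Fact G.Preconnected] {A : Set V}
    (hA : A.Infinite) (S : Finset V) : ∃ C : G.ComponentCompl S, (C.supp ∩ A).Infinite := by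
  by_contra! hfin
  refine (hA.sdiff S.finite_toSet).mono ?_ (Set.finite_iUnion hfin)
  rintro x ⟨hxA, hxS⟩
  exact Set.mem_iUnion.2 ⟨G.componentComplMk hxS, G.componentComplMk_mem hxS, hxA⟩

open CategoryTheory in
def componentComplInfiniteInter (G : SimpleGraph V) (A : Set V) :
    Subfunctor G.componentComplFunctor where
  obj _ := {C | (C.supp ∩ A).Infinite}
  map f _ hC :=
    hC.mono (Set.inter_subset_inter_left A (ComponentCompl.subset_hom _ (le_of_op_hom f)))

theorem exists_end_forall_infinite_inter [G.LocallyFinite] [Fact G.Preconnected] {A : Set V}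
    (hA : A.Infinite) : ∃ e ∈ G.end, ∀ S, ((e S).supp ∩ A).Infinite := by
  let F := (G.componentComplInfiniteInter A).toFunctor
  have (S : (Finset V)ᵒᵖ) : Nonempty (F.obj S) :=
    let ⟨C, hC⟩ := exists_componentCompl_infinite_inter hA S.unop
    ⟨⟨C, hC⟩⟩
  have (S : (Finset V)ᵒᵖ) : Finite (F.obj S) :=
    Finite.of_injective (β := G.ComponentCompl S.unop) Subtype.val Subtype.val_injective
  obtain ⟨s, hs⟩ := nonempty_sections_of_finite_inverse_system F
  exact ⟨fun S => s S, fun f => congrArg Subtype.val (hs f), fun S => (s S).2⟩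

theorem end_infinite_of_pairwise_disjoint [G.LocallyFinite] [Fact G.Preconnected]
    {ι : Type*} [Infinite ι] (D : ι → Set V) (hinf : ∀ i, (D i).Infinite)
    (hdisj : Pairwise fun i j => Disjoint (D i) (D j))
    (hbdry : ∀ i, {x ∈ D i | ∃ y, G.Adj x y ∧ y ∉ D i}.Finite) : G.end.Infinite := by
  choose e he hinter using fun i => exists_end_forall_infinite_inter (G := G) (hinf i)
  refine Set.infinite_of_injective_forall_mem (f := e) (fun i j hij => ?_) he
  by_contra hne
  let S := Opposite.op (hbdry i).toFinset
  obtain ⟨v, hvC, hvD⟩ := (hinter i S).nonempty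
  obtain ⟨w, hwC, hwD⟩ := (hinter j S).nonempty
  rw [← hij] at hwC
  have hwDi : w ∈ D i :=
    (ComponentCompl.mem_iff_of_boundary_subset (by simp [S]) _ hvC hwC).1 hvD
  exact Set.disjoint_left.1 (hdisj hne) hwDi hwD

end SimpleGraph

lemma openGraph_neighborSet_subset (η : Config) (u : Vertex) :
    (openGraph η).neighborSet u ⊆ {u + (1, 0), u + (0, 1), u - (1, 0), u - (0, 1)} := by
  rintro w ⟨-, ⟨p, d⟩, -, hj⟩
  cases d <;> rcases hj with ⟨rfl, rfl⟩ | ⟨rfl, rfl⟩ <;> simp [edgeDir]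

lemma openGraph_neighborSet_finite (η : Config) (u : Vertex) :
    ((openGraph η).neighborSet u).Finite :=
  (Set.toFinite _).subset (openGraph_neighborSet_subset η u)

lemma IsCluster.connected_induce {η : Config} {K : Set Vertex} (hK : IsCluster η K) :
    ((openGraph η).induce K).Connected := by
  obtain ⟨v, rfl⟩ := hK
  have hsupp :
      {u | (openGraph η).Reachable v u} = ((openGraph η).connectedComponentMk v).supp := by
    ext u
    simp [SimpleGraph.ConnectedComponent.mem_supp_iff, SimpleGraph.reachable_comm]
  rw [hsupp]
  exact (SimpleGraph.ConnectedComponent.maximal_connected_induce_supp _).prop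

namespace IsClusterHP

variable {b : ℤ} {η : Config} {D : Set Vertex}

lemma le_snd (hD : IsClusterHP b η D) {u : Vertex} (hu : u ∈ D) : b ≤ u.2 := by
  obtain ⟨v, hv, rfl⟩ := hD
  obtain ⟨p⟩ := hu
  cases p.reverse with
  | nil => exact hv
  | cons h _ => exact h.1

lemma mem_of_adj (hD : IsClusterHP b η D) {x y : Vertex} (hx : x ∈ D) (hxb : x.2 ≠ b)
    (hxy : (openGraph η).Adj x y) : y ∈ D := by
  have hbx := hD.le_snd hx
  have hyb : b ≤ y.2 := by
    rcases openGraph_neighborSet_subset η x hxy with rfl | rfl | rfl | rfl <;> simp <;> omega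
  obtain ⟨v, -, rfl⟩ := hD
  exact hx.trans (SimpleGraph.Adj.reachable ⟨hbx, hyb, hxy⟩)

lemma finite_boundary (hD : IsClusterHP b η D) (htrace : {x : ℤ | (x, b) ∈ D}.Finite) :
    {x ∈ D | ∃ y, (openGraph η).Adj x y ∧ y ∉ D}.Finite := by
  refine (htrace.image fun t => (t, b)).subset ?_
  rintro x ⟨hx, y, hxy, hy⟩
  have hxb : x.2 = b := by_contra fun hxb => hy (hD.mem_of_adj hx hxb hxy)
  exact ⟨x.1, by simpa [← hxb] using hx, by simp [← hxb]⟩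

lemma disjoint {D' : Set Vertex} (hD : IsClusterHP b η D) (hD' : IsClusterHP b η D')
    (hne : D ≠ D') : Disjoint D D' := by
  obtain ⟨v, -, rfl⟩ := hD
  obtain ⟨v', -, rfl⟩ := hD'
  refine Set.disjoint_left.2 fun x (hx : (hpGraph b η).Reachable v x)
    (hx' : (hpGraph b η).Reachable v' x) => hne ?_
  ext u
  exact ⟨fun hu => hx'.trans (hx.symm.trans hu), fun hu => hx.trans (hx'.symm.trans hu)⟩

end IsClusterHP

/-- Let `K` be a cluster of `G_η`.  If there are infinitely
many distinct infinite clusters `D` of the half-plane restriction `HP_b(G_η)`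
contained in `K` which meet the line `y = b` in a finite set, then `K`
(as a graph on its own vertex set) has infinitely many ends. -/
theorem infinitely_many_ends_of_cluster
    (η : Config) (b : ℤ) (K : Set Vertex) (hK : IsCluster η K)
    (h : {D : Set Vertex | IsClusterHP b η D ∧ D.Infinite ∧ D ⊆ K ∧
          {x : ℤ | (x, b) ∈ D}.Finite}.Infinite) :
    ((openGraph η).induce K).end.Infinite := by
  have := h.to_subtype
  have : Fact ((openGraph η).induce K).Preconnected := ⟨hK.connected_induce.preconnected⟩
  have : ((openGraph η).induce K).LocallyFinite := fun v =>
    ((openGraph_neighborSet_finite η v).preimage Subtype.val_injective.injOn).fintype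
  refine SimpleGraph.end_infinite_of_pairwise_disjoint
    (fun D : ↥{D : Set Vertex | IsClusterHP b η D ∧ D.Infinite ∧ D ⊆ K ∧
      {x : ℤ | (x, b) ∈ D}.Finite} => Subtype.val ⁻¹' (D : Set Vertex)) ?_ ?_ ?_
  · rintro ⟨D, -, hD, hDK, -⟩
    exact hD.preimage (by simpa using hDK)
  · intro ⟨D, hD, _⟩ ⟨D', hD', _⟩ hne
    exact (hD.disjoint hD' (by simpa using hne)).preimage _
  · rintro ⟨D, hD, -, -, htrace⟩
    exact ((hD.finite_boundary htrace).preimage Subtype.val_injective.injOn).subset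
      fun x ⟨hx, y, hxy, hy⟩ => ⟨hx, y, hxy, hy⟩
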